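/- Fix t ∈ [0,1], n ≥ 3, 3 ≤ k ≤ n, and h > 0. For η ∈ ℝⁿ with tη + (1−t)(tr η)e ∈ Γ_{k−1}, the operator G(η) = σ_k(tη+(1−t)(tr η)e)/σ_{k−1}(tη+(1−t)(tr η)e) − h/σ_{k−1}(tη+(1−t)(tr η)e) satisfies ∂G/∂η_j > 0 for every j (ellipticity). -/

import Mathlib

/-!
Moving `η_j` moves `λ = tη + (1-t)(tr η)e` along `w = t e_j + (1-t)e`, a vector with
nonnegative entries and `w_j = 1`. Writing `λ|i` for `λ` with the `i`-th entry removed,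
`∂_w σ_m(λ) = Σ_i w_i σ_{m-1}(λ|i)`, and expanding `σ_m(λ) = σ_m(λ|i) + λ_i σ_{m-1}(λ|i)` turns
the numerator of `∂_w G` into
`Σ_i w_i ((σ_{k-1}(λ|i)² - σ_k(λ|i) σ_{k-2}(λ|i)) + h σ_{k-2}(λ|i))`.
The first summand is nonnegative by Newton's inequality, which holds for every real vector because
real-rootedness of `∏ (X + λ_i)` survives differentiation and reversal down to a quadratic. The
second is positive because `λ ∈ Γ_{k-1}` forces `λ|i ∈ Γ_{k-2}`, again by Newton's inequality
and induction on the index.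
-/

open Finset

/-- The k-th elementary symmetric polynomial of x : Fin n -> R. -/
noncomputable def esymm (n k : ℕ) (x : Fin n → ℝ) : ℝ :=
  ∑ s ∈ Finset.univ.powersetCard k, ∏ i ∈ s, x i

/-- The Garding cone Gamma_k. -/
def Gamma (n k : ℕ) : Set (Fin n → ℝ) :=
  {x | ∀ j, 1 ≤ j → j ≤ k → 0 < esymm n j x}

/-- Partial derivative of f in the i-th coordinate direction at mu. -/
noncomputable def pdv (n : ℕ) (i : Fin n) (f : (Fin n → ℝ) → ℝ) (μ : Fin n → ℝ) : ℝ :=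
  deriv (fun s => f (Function.update μ i s)) (μ i)

open scoped Nat

theorem Nat.add_one_descFactorial_self (n : ℕ) : (n + 1).descFactorial n = (n + 1) * n ! := by
  simpa [Nat.factorial_succ] using Nat.factorial_mul_descFactorial (Nat.le_succ n)

theorem Nat.add_two_descFactorial_self_mul_two (n : ℕ) :
    (n + 2).descFactorial n * 2 = (n + 2) * ((n + 1) * n !) := by
  have h := Nat.factorial_mul_descFactorial (Nat.le_add_right n 2)
  rw [Nat.add_sub_cancel_left, Nat.factorial_two, Nat.factorial_succ, Nat.factorial_succ] at h
  linarith

namespace Polynomial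

theorem Splits.reverse {K : Type*} [Field K] {p : K[X]} (hp : p.Splits) : p.reverse.Splits := by
  induction hp using Submonoid.closure_induction with
  | mem f hf =>
    rcases hf with ⟨a, rfl⟩ | ⟨a, rfl⟩
    · simp
    · exact Splits.of_natDegree_le_one ((reverse_natDegree_le _).trans (by compute_degree!))
  | one => rw [← C_1, reverse_C]; exact Splits.C 1
  | mul f g _ _ hf hg => rw [reverse_mul_of_domain]; exact hf.mul hg

theorem Splits.derivative_of_real {p : ℝ[X]} (hp : p.Splits) : (derivative p).Splits := by
  rw [splits_iff_card_roots] at hp ⊢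
  have hrolle := p.card_roots_le_derivative
  have hdeg := natDegree_derivative_le p
  have hcard := (derivative p).card_roots'
  omega

theorem Splits.iterate_derivative_of_real {p : ℝ[X]} (hp : p.Splits) (m : ℕ) :
    (derivative^[m] p).Splits := by
  induction m with
  | zero => exact hp
  | succ m ih => rw [Function.iterate_succ_apply']; exact ih.derivative_of_real

theorem Splits.four_mul_coeff_mul_coeff_le_sq {K : Type*} [Field K] [LinearOrder K]
    [IsStrictOrderedRing K] {p : K[X]} (hp : p.Splits) (hd : p.natDegree ≤ 2) :
    4 * p.coeff 2 * p.coeff 0 ≤ p.coeff 1 ^ 2 := by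
  rcases eq_or_ne (p.coeff 2) 0 with h2 | h2
  · simp [h2, sq_nonneg]
  have hdeg : p.natDegree = 2 := le_antisymm hd (le_natDegree_of_ne_zero h2)
  obtain ⟨x, hx⟩ := hp.exists_eval_eq_zero
    (by simp [degree_eq_natDegree (p := p) (by rintro rfl; simp_all), hdeg])
  rw [eval_eq_sum_range, hdeg] at hx
  simp only [Finset.sum_range_succ, Finset.sum_range_zero] at hx
  have hdisc := discrim_eq_sq_of_quadratic_eq_zero (a := p.coeff 2) (b := p.coeff 1)
    (c := p.coeff 0) (x := x) (by linear_combination hx)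
  rw [discrim] at hdisc
  nlinarith [sq_nonneg (2 * p.coeff 2 * x + p.coeff 1)]

theorem Splits.coeff_mul_coeff_add_two_le_sq {p : ℝ[X]} (hp : p.Splits) {i d : ℕ}
    (hdeg : p.natDegree = i + 2 + d) :
    (i + 2) * (d + 2) * (p.coeff i * p.coeff (i + 2)) ≤
      (i + 1) * (d + 1) * p.coeff (i + 1) ^ 2 := by
  have hQ : (derivative^[i] p).natDegree = d + 2 := by
    apply le_antisymm
    · have := natDegree_iterate_derivative p i
      omega
    · apply le_natDegree_of_ne_zero
      rw [coeff_iterate_derivative, nsmul_eq_mul, show d + 2 + i = p.natDegree by omega]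
      refine mul_ne_zero (Nat.cast_ne_zero.2 (Nat.descFactorial_eq_zero_iff_lt.not.2 (by omega))) ?_
      exact leadingCoeff_ne_zero.2 (by rintro rfl; rw [natDegree_zero] at hdeg; omega)
  have hS_deg : (derivative^[d] (derivative^[i] p).reverse).natDegree ≤ 2 :=
    (natDegree_iterate_derivative _ d).trans
      (by have := (derivative^[i] p).reverse_natDegree_le; omega)
  set S := derivative^[d] (derivative^[i] p).reverse
  have hS : ∀ m ≤ 2, S.coeff m =
      ((m + d).descFactorial d * (2 - m + i).descFactorial i : ℕ) * p.coeff (2 - m + i) := by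
    intro m hm
    rw [coeff_iterate_derivative, coeff_reverse, hQ, revAt_le (by omega),
      coeff_iterate_derivative, show d + 2 - (m + d) = 2 - m by omega, nsmul_eq_mul, nsmul_eq_mul]
    push_cast
    ring
  have key := ((hp.iterate_derivative_of_real i).reverse.iterate_derivative_of_real
    d).four_mul_coeff_mul_coeff_le_sq hS_deg
  rw [hS 0 (by norm_num), hS 1 (by norm_num), hS 2 (by norm_num)] at key
  simp only [zero_add, Nat.sub_zero, Nat.sub_self, Nat.descFactorial_self, Nat.cast_mul] at key
  rw [show 2 - 1 + i = i + 1 by omega, add_comm 2 i, add_comm 2 d, add_comm 1 d] at key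
  have e1 (n : ℕ) : ((n + 1).descFactorial n : ℝ) = (n + 1) * n ! := by
    exact_mod_cast Nat.add_one_descFactorial_self n
  have e2 (n : ℕ) : ((n + 2).descFactorial n : ℝ) = (n + 2) * (n + 1) * n ! / 2 := by
    rw [eq_div_iff two_ne_zero, mul_assoc]
    exact_mod_cast Nat.add_two_descFactorial_self_mul_two n
  rw [e1, e1, e2, e2] at key
  refine le_of_mul_le_mul_left ?_
    (by positivity : (0 : ℝ) < (i + 1) * (d + 1) * i ! ^ 2 * d ! ^ 2)
  linear_combination key

end Polynomial

namespace Multiset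

variable {R : Type*} [CommSemiring R]

@[simp] theorem esymm_zero (M : Multiset R) : M.esymm 0 = 1 := by
  simp [esymm]

theorem esymm_eq_zero_of_card_lt {M : Multiset R} {k : ℕ} (h : card M < k) : M.esymm k = 0 := by
  simp [esymm, powersetCard_eq_empty _ h]

theorem esymm_cons_add_one (a : R) (M : Multiset R) (k : ℕ) :
    (a ::ₘ M).esymm (k + 1) = M.esymm (k + 1) + a * M.esymm k := by
  simp [esymm, powersetCard_cons, sum_map_mul_left]

open Polynomial in
theorem esymm_mul_esymm_le_sq (M : Multiset ℝ) (k : ℕ) :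
    M.esymm k * M.esymm (k + 2) ≤ M.esymm (k + 1) ^ 2 := by
  rcases lt_or_ge (card M) (k + 2) with h | h
  · simp [esymm_eq_zero_of_card_lt h, sq_nonneg]
  obtain ⟨d, hd⟩ := Nat.exists_eq_add_of_le' h
  set P := (M.map fun r => X + C r).prod
  have hP : P.Splits := Splits.multisetProd (by simp [Splits.X_add_C])
  have hdeg : P.natDegree = d + 2 + k := by
    rw [natDegree_multiset_prod_of_monic _ (by simp [monic_X_add_C])]
    simp [hd]; omega
  have hcoeff (j : ℕ) (hj : j ≤ d + 2) : P.coeff j = M.esymm (d + 2 + k - j) := by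
    rw [prod_X_add_C_coeff M (by omega), hd]; congr 1; omega
  have hN := hP.coeff_mul_coeff_add_two_le_sq hdeg
  rw [hcoeff d (by omega), hcoeff (d + 1) (by omega), hcoeff (d + 2) le_rfl,
    show d + 2 + k - d = k + 2 by omega, show d + 2 + k - (d + 1) = k + 1 by omega,
    Nat.add_sub_cancel_left] at hN
  rcases le_or_gt 0 (M.esymm k * M.esymm (k + 2)) with hs | hs
  · have hc : ((d : ℝ) + 1) * (k + 1) ≤ (d + 2) * (k + 2) := by
      gcongr <;> norm_num
    have hpos : (0 : ℝ) < (d + 1) * (k + 1) := by positivity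
    nlinarith [mul_le_mul_of_nonneg_right hc hs]
  · nlinarith [sq_nonneg (M.esymm (k + 1))]

theorem esymm_pos_of_cons {a : ℝ} {M : Multiset ℝ} {m : ℕ}
    (h : ∀ j, 1 ≤ j → j ≤ m + 1 → 0 < (a ::ₘ M).esymm j) : ∀ j ≤ m, 0 < M.esymm j := by
  intro j hj
  induction j with
  | zero => simp
  | succ j ih =>
    have hp := ih (by omega)
    have h1 := h (j + 1) (by omega) (by omega)
    have h2 := h (j + 2) (by omega) (by omega)
    rw [esymm_cons_add_one] at h1 h2
    have hN := M.esymm_mul_esymm_le_sq j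
    by_contra! hs
    nlinarith [mul_lt_mul_of_pos_left
        (show -(a * M.esymm (j + 1)) < M.esymm (j + 2) by linarith) hp,
      mul_le_mul_of_nonneg_left
        (show -M.esymm (j + 1) ≤ a * M.esymm j by linarith) (neg_nonneg.2 hs)]

theorem esymm_cons_mul_sub_pos {a h : ℝ} {M : Multiset ℝ} {k : ℕ} (hh : 0 < h)
    (hΓ : ∀ j, 1 ≤ j → j ≤ k + 1 → 0 < (a ::ₘ M).esymm j) :
    0 < M.esymm (k + 1) * (a ::ₘ M).esymm (k + 1) -
      ((a ::ₘ M).esymm (k + 2) - h) * M.esymm k := by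
  have hN := M.esymm_mul_esymm_le_sq k
  have hk := M.esymm_pos_of_cons hΓ k le_rfl
  rw [esymm_cons_add_one, esymm_cons_add_one]
  nlinarith

end Multiset

theorem Finset.map_val_insert {ι α : Type*} [DecidableEq ι] {a : ι} {s : Finset ι} (ha : a ∉ s)
    (f : ι → α) : (insert a s).val.map f = f a ::ₘ s.val.map f := by
  simp [Finset.insert_val_of_notMem ha]

theorem Finset.map_val_eq_cons_erase {ι α : Type*} [DecidableEq ι] {a : ι} {s : Finset ι}
    (ha : a ∈ s) (f : ι → α) : s.val.map f = f a ::ₘ (s.erase a).val.map f := by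
  rw [← Finset.map_val_insert (Finset.notMem_erase a s), Finset.insert_erase ha]

section Derivative

variable {ι : Type*} [DecidableEq ι]

theorem hasDerivAt_esymm_map_add_smul (s : Finset ι) (μ w : ι → ℝ) (k : ℕ) :
    HasDerivAt (fun τ : ℝ => (s.val.map (μ + τ • w)).esymm (k + 1))
      (∑ i ∈ s, w i * ((s.erase i).val.map μ).esymm k) 0 := by
  induction s using Finset.induction_on generalizing k with
  | empty =>
    simpa [Multiset.esymm, Multiset.powersetCard_zero_right] using hasDerivAt_const (0 : ℝ) (0 : ℝ)
  | insert a s ha ih =>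
    have herase (i : ι) (hi : i ∈ s) :
        ((insert a s).erase i).val.map μ = μ a ::ₘ (s.erase i).val.map μ := by
      rw [Finset.erase_insert_of_ne (ne_of_mem_of_not_mem hi ha).symm,
        Finset.map_val_insert (fun h => ha (Finset.mem_of_mem_erase h))]
    have hline : HasDerivAt (fun τ : ℝ => (μ + τ • w) a) (w a) 0 := by
      simpa using ((hasDerivAt_id (0 : ℝ)).smul_const (w a)).const_add (μ a)
    simp only [Finset.map_val_insert ha, Multiset.esymm_cons_add_one]
    rw [Finset.sum_insert ha, Finset.erase_insert ha,
      Finset.sum_congr rfl fun i hi => by rw [herase i hi]]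
    cases k with
    | zero =>
      simp only [Multiset.esymm_zero]
      refine ((ih 0).add (hline.mul_const 1)).congr_deriv ?_
      simp [add_comm]
    | succ k =>
      refine ((ih (k + 1)).add (hline.mul (ih k))).congr_deriv ?_
      rw [zero_smul, add_zero]
      simp only [Multiset.esymm_cons_add_one, mul_add, Finset.sum_add_distrib, Finset.mul_sum,
        mul_left_comm (μ a)]
      ring

theorem hasDerivAt_esymm_div_sub_div (s : Finset ι) (μ w : ι → ℝ) (k : ℕ) (h : ℝ)
    (hB : (s.val.map μ).esymm (k + 1) ≠ 0) :
    HasDerivAt (fun τ : ℝ => (s.val.map (μ + τ • w)).esymm (k + 2) /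
        (s.val.map (μ + τ • w)).esymm (k + 1) - h / (s.val.map (μ + τ • w)).esymm (k + 1))
      ((∑ i ∈ s, w i * (((s.erase i).val.map μ).esymm (k + 1) * (s.val.map μ).esymm (k + 1) -
        ((s.val.map μ).esymm (k + 2) - h) * ((s.erase i).val.map μ).esymm k)) /
          (s.val.map μ).esymm (k + 1) ^ 2) 0 := by
  have hB₀ : (s.val.map (μ + (0 : ℝ) • w)).esymm (k + 1) ≠ 0 := by rwa [zero_smul, add_zero]
  have hA' := hasDerivAt_esymm_map_add_smul s μ w (k + 1)
  have hB' := hasDerivAt_esymm_map_add_smul s μ w k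
  refine ((hA'.div hB' hB₀).sub ((hasDerivAt_const 0 h).div hB' hB₀)).congr_deriv ?_
  have hnum : ∑ i ∈ s, w i * (((s.erase i).val.map μ).esymm (k + 1) *
      (s.val.map μ).esymm (k + 1) - ((s.val.map μ).esymm (k + 2) - h) *
        ((s.erase i).val.map μ).esymm k) =
      (∑ i ∈ s, w i * ((s.erase i).val.map μ).esymm (k + 1)) * (s.val.map μ).esymm (k + 1) -
        ((s.val.map μ).esymm (k + 2) - h) * ∑ i ∈ s, w i * ((s.erase i).val.map μ).esymm k := by
    rw [Finset.sum_mul, Finset.mul_sum, ← Finset.sum_sub_distrib]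
    exact Finset.sum_congr rfl fun i _ => by ring
  rw [zero_smul, add_zero, hnum]
  ring

end Derivative

theorem esymm_eq_esymm_map_val (n m : ℕ) (x : Fin n → ℝ) : esymm n m x = (univ.val.map x).esymm m :=
  (Finset.esymm_map_val x univ m).symm

theorem mul_update_add_mul_sum_update {ι : Type*} [Fintype ι] [DecidableEq ι] (t : ℝ) (η : ι → ℝ)
    (j : ι) (s : ℝ) :
    (fun i => t * Function.update η j s i + (1 - t) * ∑ p, Function.update η j s p) =
      (fun i => t * η i + (1 - t) * ∑ p, η p) +
        (s - η j) • fun i => if i = j then 1 else 1 - t := by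
  have hsum : ∑ p, Function.update η j s p = ∑ p, η p + (s - η j) := by
    rw [Finset.sum_update_of_mem (mem_univ j), ← Finset.add_sum_erase _ _ (mem_univ j),
      Finset.sdiff_singleton_eq_erase]
    ring
  funext i
  rcases eq_or_ne i j with rfl | hij
  · simp [hsum]
    ring
  · simp [hsum, hij]
    ring

theorem operator_elliptic_general (n k : ℕ) (hk : 3 ≤ k)
    (t h : ℝ) (ht1 : t ≤ 1) (hh : 0 < h)
    (η : Fin n → ℝ)
    (hη : (fun i => t * η i + (1 - t) * ∑ p, η p) ∈ Gamma n (k - 1)) :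
    ∀ j : Fin n,
      0 < pdv n j (fun ξ =>
          esymm n k (fun i => t * ξ i + (1 - t) * ∑ p, ξ p) /
            esymm n (k - 1) (fun i => t * ξ i + (1 - t) * ∑ p, ξ p) -
          h / esymm n (k - 1) (fun i => t * ξ i + (1 - t) * ∑ p, ξ p)) η := by
  intro j
  obtain ⟨k, rfl⟩ : ∃ m, k = m + 2 := ⟨k - 2, by omega⟩
  rw [show k + 2 - 1 = k + 1 from rfl] at hη ⊢
  set μ : Fin n → ℝ := fun i => t * η i + (1 - t) * ∑ p, η p
  set w : Fin n → ℝ := fun i => if i = j then 1 else 1 - t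
  have hΓ : ∀ m, 1 ≤ m → m ≤ k + 1 → 0 < (univ.val.map μ).esymm m := by
    simpa [Gamma, esymm_eq_esymm_map_val] using hη
  have hw (i : Fin n) : 0 ≤ w i := by
    simp only [w]; split_ifs <;> linarith
  have hB := hΓ (k + 1) (by omega) le_rfl
  have hG := HasDerivAt.comp_sub_const (η j) (η j)
    (by rw [sub_self]; exact hasDerivAt_esymm_div_sub_div univ μ w k h hB.ne')
  rw [pdv, (hG.congr_of_eventuallyEq (Filter.Eventually.of_forall fun s => ?_)).deriv]
  · have hbracket (i : Fin n) : 0 < ((univ.erase i).val.map μ).esymm (k + 1) *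
        (univ.val.map μ).esymm (k + 1) -
          ((univ.val.map μ).esymm (k + 2) - h) * ((univ.erase i).val.map μ).esymm k := by
      rw [Finset.map_val_eq_cons_erase (mem_univ i)] at hΓ ⊢
      exact Multiset.esymm_cons_mul_sub_pos hh hΓ
    refine div_pos (Finset.sum_pos' (fun i _ => mul_nonneg (hw i) (hbracket i).le)
      ⟨j, mem_univ j, ?_⟩) (pow_pos hB 2)
    simpa [w] using hbracket j
  · simp only [esymm_eq_esymm_map_val, mul_update_add_mul_sum_update]
    rfl

/-- Ellipticity of the operator G. -/
theorem operator_elliptic (n k : ℕ) (hn : 3 ≤ n) (hk : 3 ≤ k) (hkn : k ≤ n)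
    (t h : ℝ) (ht0 : 0 < t) (ht1 : t ≤ 1) (hh : 0 < h)
    (η : Fin n → ℝ)
    (hη : (fun i => t * η i + (1 - t) * ∑ p, η p) ∈ Gamma n (k - 1)) :
    ∀ j : Fin n,
      0 < pdv n j (fun ξ =>
          esymm n k (fun i => t * ξ i + (1 - t) * ∑ p, ξ p) /
            esymm n (k - 1) (fun i => t * ξ i + (1 - t) * ∑ p, ξ p) -
          h / esymm n (k - 1) (fun i => t * ξ i + (1 - t) * ∑ p, ξ p)) η :=
  operator_elliptic_general n k hk t h ht1 hh η hη
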